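/- Let q ≥ 3 and let ∇ ∈ ℝ^{p×n} be the discrete gradient operator of the 2-dimensional regular grid graph on V = {0,…,q−1}², so n = q² and p = 2q(q−1). Then for every integer ℓ with 4 < ℓ ≤ p, κ_∇(ℓ) ≤ n − (1/2)(ℓ + √(1 + 2ℓ)) + 1/2. -/

import Mathlib

/-!
`W_Λ` is the space of functions that are constant on the connected components of the graph
`(V, Λ)` (the kernel of its Laplacian), so `dim W_Λ = c` is the number of components.
A set of `s` vertices of the planar grid spans at most `2s - 2√s` edges: for each axis, the
edges along it plus the lines parallel to it that the set meets number at most `s`, and `s` is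
at most the product of the numbers of lines met in the two directions, whose sum is therefore at
least `2√s`. Since `f(s) = 2s - 2√s` satisfies `f(a) + f(b) ≤ f(a + b - 1)` for
`a, b ≥ 1`, summing over the components gives `ℓ ≤ |Λ| ≤ f(n - c + 1)`, which is solved for `c`.
-/

/-- Base-`q` encoding of a grid point, used to orient the edges of the grid graph. -/
def enc (q d : ℕ) (v : Fin d → Fin q) : ℕ := ∑ i : Fin d, q ^ (i : ℕ) * (v i : ℕ)

/-- The (oriented) edges of the regular grid graph on `{0,…,q−1}^d`: pairs of vertices at
ℓ1-distance 1, canonically oriented. They index the rows of the discrete gradient. -/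
abbrev OEdge (q d : ℕ) : Type :=
  {e : (Fin d → Fin q) × (Fin d → Fin q) //
    (∑ i, |(e.1 i : ℤ) - (e.2 i : ℤ)|) = 1 ∧ enc q d e.1 < enc q d e.2}

/-- The discrete gradient operator of the regular grid graph: one row per edge
`e = (v₁, v₂)`, with entry `−1` in the column of `v₁`, `+1` in the column of `v₂`. -/
def grad (q d : ℕ) : Matrix (OEdge q d) (Fin d → Fin q) ℝ :=
  Matrix.of fun e v => if v = e.1.2 then 1 else if v = e.1.1 then -1 else 0

/-- `W_Λ`: the nullspace of the rows of the discrete gradient indexed by `Λ`. -/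
noncomputable def Wgrad (q d : ℕ) (Λ : Finset (OEdge q d)) :
    Submodule ℝ ((Fin d → Fin q) → ℝ) :=
  ⨅ e ∈ Λ, LinearMap.ker
    ((LinearMap.proj e : (OEdge q d → ℝ) →ₗ[ℝ] ℝ) ∘ₗ (grad q d).mulVecLin)

/-- `κ_∇(ℓ) = max{dim W_Λ : Λ ⊆ E, |Λ| ≥ ℓ}` for the discrete gradient of the grid. -/
noncomputable def kappaGrad (q d ℓ : ℕ) : ℕ :=
  (Finset.univ.filter (fun Λ : Finset (OEdge q d) => ℓ ≤ Λ.card)).sup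
    (fun Λ => Module.finrank ℝ (Wgrad q d Λ))

open Finset Matrix

lemma grad_mulVec_apply {q d : ℕ} (x : (Fin d → Fin q) → ℝ) (e : OEdge q d) :
    (grad q d *ᵥ x) e = x e.1.2 - x e.1.1 := by
  have hne : e.1.1 ≠ e.1.2 := fun h => (h ▸ e.2.2).false
  simp [grad, mulVec, dotProduct, ite_mul, sum_ite, filter_ne', filter_eq', hne, sub_eq_add_neg]

lemma mem_Wgrad {q d : ℕ} {Λ : Finset (OEdge q d)} {x : (Fin d → Fin q) → ℝ} :
    x ∈ Wgrad q d Λ ↔ ∀ e ∈ Λ, x e.1.1 = x e.1.2 := by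
  simp only [Wgrad, Submodule.mem_iInf, LinearMap.mem_ker, LinearMap.comp_apply,
    LinearMap.proj_apply, mulVecLin_apply, grad_mulVec_apply, sub_eq_zero, eq_comm]

def gridGraph (q d : ℕ) (Λ : Finset (OEdge q d)) : SimpleGraph (Fin d → Fin q) :=
  SimpleGraph.fromEdgeSet ((fun e : OEdge q d => s(e.1.1, e.1.2)) '' Λ)

lemma mem_Wgrad_iff_forall_adj {q d : ℕ} {Λ : Finset (OEdge q d)}
    {x : (Fin d → Fin q) → ℝ} :
    x ∈ Wgrad q d Λ ↔ ∀ v w, (gridGraph q d Λ).Adj v w → x v = x w := by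
  rw [mem_Wgrad]
  constructor
  · rintro h v w ⟨⟨e, he, hvw⟩, -⟩
    rcases Sym2.eq_iff.mp hvw with ⟨rfl, rfl⟩ | ⟨rfl, rfl⟩
    exacts [h e he, (h e he).symm]
  · intro h e he
    exact h _ _ ⟨⟨e, he, rfl⟩, fun h' => (h' ▸ e.2.2).false⟩

lemma finrank_Wgrad (q d : ℕ) (Λ : Finset (OEdge q d)) :
    Module.finrank ℝ (Wgrad q d Λ) = Nat.card (gridGraph q d Λ).ConnectedComponent := by
  classical
  have hker : Wgrad q d Λ = ((gridGraph q d Λ).lapMatrix ℝ).toLin'.ker := by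
    ext x
    rw [mem_Wgrad_iff_forall_adj, LinearMap.mem_ker, Matrix.toLin'_apply,
      SimpleGraph.lapMatrix_mulVec_eq_zero_iff_forall_adj]
  rw [hker, ← SimpleGraph.card_connectedComponent_eq_finrank_ker_toLin'_lapMatrix,
    Nat.card_eq_fintype_card]

lemma card_connectedComponent_le {V : Type*} [Finite V] (G : SimpleGraph V) :
    Nat.card G.ConnectedComponent ≤ Nat.card V :=
  Nat.card_le_card_of_surjective _ fun K => K.exists_rep

def lineKey {q d : ℕ} (i : Fin d) (v : Fin d → Fin q) : {k // k ≠ i} → Fin q :=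
  fun k => v k

lemma eq_of_lineKey_eq {q d : ℕ} {i : Fin d} {v w : Fin d → Fin q}
    (hkey : lineKey i v = lineKey i w) (hi : v i = w i) : v = w := by
  funext k
  by_cases hk : k = i
  · exact hk ▸ hi
  · exact congrFun hkey ⟨k, hk⟩

lemma card_le_card_lines_mul {q d : ℕ} {i j : Fin d} (hij : i ≠ j)
    (S : Finset (Fin d → Fin q)) :
    #S ≤ #(S.image (lineKey i)) * #(S.image (lineKey j)) := by
  rw [← card_product]
  refine card_le_card_of_injOn (fun v => (lineKey i v, lineKey j v))
    (fun v hv => mem_product.2 ⟨mem_image_of_mem _ hv, mem_image_of_mem _ hv⟩) ?_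
  intro v _ w _ hvw
  exact eq_of_lineKey_eq (Prod.ext_iff.1 hvw).1 (congrFun (Prod.ext_iff.1 hvw).2 ⟨i, hij⟩)

def OEdge.IsAlong {q d : ℕ} (e : OEdge q d) (i : Fin d) : Prop :=
  lineKey i e.1.1 = lineKey i e.1.2 ∧ (e.1.2 i : ℕ) = e.1.1 i + 1

instance {q d : ℕ} (e : OEdge q d) (i : Fin d) : Decidable (e.IsAlong i) :=
  inferInstanceAs (Decidable (_ ∧ _))

lemma OEdge.exists_isAlong {q d : ℕ} (e : OEdge q d) : ∃ i, e.IsAlong i := by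
  obtain ⟨⟨a, b⟩, hsum, henc⟩ := e
  dsimp only at hsum henc ⊢
  obtain ⟨i, hi⟩ : ∃ i, a i ≠ b i := by
    by_contra! h
    simp [h] at hsum
  rw [← add_sum_erase _ _ (mem_univ i)] at hsum
  have hi1 : 1 ≤ |(a i : ℤ) - b i| :=
    Int.one_le_abs (sub_ne_zero.2 (by exact_mod_cast Fin.val_injective.ne hi))
  have hsum0 : ∑ k ∈ univ.erase i, |(a k : ℤ) - b k| = 0 :=
    le_antisymm (by linarith) (sum_nonneg fun _ _ => abs_nonneg _)
  have hothers : ∀ k ≠ i, a k = b k := fun k hk => by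
    have := (sum_eq_zero_iff_of_nonneg fun _ _ => abs_nonneg _).1 hsum0 k
      (mem_erase.2 ⟨hk, mem_univ k⟩)
    rw [abs_eq_zero, sub_eq_zero] at this
    exact Fin.ext (by exact_mod_cast this)
  have hlt : a i < b i := by
    by_contra! hle
    refine henc.not_ge (sum_le_sum fun k _ => ?_)
    by_cases hk : k = i
    · subst hk; gcongr; exact_mod_cast hle
    · rw [hothers k hk]
  refine ⟨i, funext fun k => hothers k k.2, ?_⟩
  show (b i : ℕ) = a i + 1
  have : (a i : ℤ) < b i := by exact_mod_cast hlt
  rw [hsum0, add_zero, abs_of_neg (sub_neg.2 this)] at hsum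
  omega

lemma card_add_card_image_le {α β : Type*} [DecidableEq α] [DecidableEq β] {S T : Finset α}
    (f : α → β) (hTS : T ⊆ S) (hfib : ∀ v ∈ S, ∃ w ∈ S \ T, f w = f v) :
    #T + #(S.image f) ≤ #S := by
  have hsub : S.image f ⊆ (S \ T).image f := by
    intro y hy
    obtain ⟨v, hv, rfl⟩ := mem_image.1 hy
    obtain ⟨w, hw, hwv⟩ := hfib v hv
    exact mem_image.2 ⟨w, hw, hwv⟩
  calc #T + #(S.image f) ≤ #T + #(S \ T) := by
        gcongr; exact (card_le_card hsub).trans card_image_le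
    _ = #S := by rw [add_comm, card_sdiff_add_card_eq_card hTS]

/-- Distinct `i`-edges inside `S` have distinct heads, and no head is the first vertex of `S` on
its `i`-line. -/
lemma card_isAlong_add_card_lines_le {q d : ℕ} {S : Finset (Fin d → Fin q)}
    {E : Finset (OEdge q d)} (hE : ∀ e ∈ E, e.1.1 ∈ S ∧ e.1.2 ∈ S) (i : Fin d) :
    #{e ∈ E | e.IsAlong i} + #(S.image (lineKey i)) ≤ #S := by
  classical
  have hinj : Set.InjOn (fun e : OEdge q d => e.1.2) ({e ∈ E | e.IsAlong i} : Finset _) := by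
    intro e he f hf hef
    obtain ⟨hek, hei⟩ := (mem_filter.1 he).2
    obtain ⟨hfk, hfi⟩ := (mem_filter.1 hf).2
    have hef : e.1.2 = f.1.2 := hef
    refine Subtype.ext (Prod.ext (eq_of_lineKey_eq (by rw [hek, hfk, hef]) ?_) hef)
    apply Fin.ext
    have := congrArg (fun v => (v i : ℕ)) hef
    omega
  rw [← card_image_of_injOn hinj]
  refine card_add_card_image_le _ ?_ ?_
  · intro v hv
    obtain ⟨e, he, rfl⟩ := mem_image.1 hv
    exact (hE e (mem_filter.1 he).1).2
  · intro v hv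
    obtain ⟨w, hw, hmin⟩ := exists_min_image {w ∈ S | lineKey i w = lineKey i v}
      (fun w => (w i : ℕ)) ⟨v, mem_filter.2 ⟨hv, rfl⟩⟩
    obtain ⟨hwS, hwv⟩ := mem_filter.1 hw
    refine ⟨w, mem_sdiff.2 ⟨hwS, fun hwT => ?_⟩, hwv⟩
    obtain ⟨e, he, rfl⟩ := mem_image.1 hwT
    obtain ⟨heE, hek, hei⟩ := mem_filter.1 he
    have := hmin e.1.1 (mem_filter.2 ⟨(hE e heE).1, hek.trans hwv⟩)
    omega

lemma card_add_sum_card_lines_le {q d : ℕ} {S : Finset (Fin d → Fin q)}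
    {E : Finset (OEdge q d)} (hE : ∀ e ∈ E, e.1.1 ∈ S ∧ e.1.2 ∈ S) :
    #E + ∑ i, #(S.image (lineKey i)) ≤ d * #S := by
  classical
  have hcover : E ⊆ univ.biUnion fun i => {e ∈ E | e.IsAlong i} := fun e he => by
    obtain ⟨i, hi⟩ := e.exists_isAlong
    exact mem_biUnion.2 ⟨i, mem_univ i, mem_filter.2 ⟨he, hi⟩⟩
  calc #E + ∑ i, #(S.image (lineKey i))
      ≤ ∑ i, (#{e ∈ E | e.IsAlong i} + #(S.image (lineKey i))) := by
        rw [sum_add_distrib]; gcongr; exact (card_le_card hcover).trans card_biUnion_le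
    _ ≤ ∑ _i : Fin d, #S := sum_le_sum fun i _ => card_isAlong_add_card_lines_le hE i
    _ = d * #S := by simp

/-- Bounds the number of edges of the planar grid spanned by `s` vertices; tight for squares. -/
noncomputable def edgeBound (s : ℝ) : ℝ := 2 * s - 2 * √s

lemma card_le_edgeBound {q : ℕ} {S : Finset (Fin 2 → Fin q)} {E : Finset (OEdge q 2)}
    (hE : ∀ e ∈ E, e.1.1 ∈ S ∧ e.1.2 ∈ S) : (#E : ℝ) ≤ edgeBound #S := by
  have hcount : (#E : ℝ) + #(S.image (lineKey 0)) + #(S.image (lineKey 1)) ≤ 2 * #S := by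
    have := card_add_sum_card_lines_le hE
    rw [Fin.sum_univ_two, ← add_assoc] at this
    exact_mod_cast this
  have hprod : (#S : ℝ) ≤ #(S.image (lineKey 0)) * #(S.image (lineKey 1)) := by
    exact_mod_cast card_le_card_lines_mul (by decide) S
  have hsqrt : 2 * √(#S : ℝ) ≤ #(S.image (lineKey 0)) + #(S.image (lineKey 1)) := by
    rw [← le_div_iff₀' two_pos, Real.sqrt_le_iff]
    refine ⟨by positivity, ?_⟩
    nlinarith [sq_nonneg ((#(S.image (lineKey 0)) : ℝ) - #(S.image (lineKey 1)))]
  rw [edgeBound]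
  linarith

lemma edgeBound_add_edgeBound_le {a b : ℝ} (ha : 1 ≤ a) (hb : 1 ≤ b) :
    edgeBound a + edgeBound b ≤ edgeBound (a + b - 1) := by
  have hsa : 1 ≤ √a := Real.one_le_sqrt.2 ha
  have hsb : 1 ≤ √b := Real.one_le_sqrt.2 hb
  have hab : √(a + b - 1) ≤ √a + √b - 1 := by
    rw [Real.sqrt_le_iff]
    refine ⟨by linarith, ?_⟩
    nlinarith [Real.sq_sqrt (zero_le_one.trans ha), Real.sq_sqrt (zero_le_one.trans hb),
      mul_le_mul hsa hsb zero_le_one (by linarith)]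
  simp only [edgeBound]
  linarith

lemma sum_edgeBound_le {ι : Type*} (s : Finset ι) (a : ι → ℝ) (ha : ∀ i ∈ s, 1 ≤ a i) :
    ∑ i ∈ s, edgeBound (a i) ≤ edgeBound (∑ i ∈ s, a i - #s + 1) := by
  classical
  induction s using Finset.induction_on with
  | empty => simp [edgeBound]
  | insert j s hj ih =>
    have hs : ∀ i ∈ s, 1 ≤ a i := fun i hi => ha i (mem_insert_of_mem hi)
    have hcard : (#s : ℝ) ≤ ∑ i ∈ s, a i := by
      simpa using card_nsmul_le_sum s a 1 hs
    rw [sum_insert hj, sum_insert hj, card_insert_of_notMem hj]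
    calc edgeBound (a j) + ∑ i ∈ s, edgeBound (a i)
        ≤ edgeBound (a j) + edgeBound (∑ i ∈ s, a i - #s + 1) := by gcongr; exact ih hs
      _ ≤ edgeBound (a j + (∑ i ∈ s, a i - #s + 1) - 1) :=
        edgeBound_add_edgeBound_le (ha j (mem_insert_self j s)) (by linarith)
      _ = _ := by push_cast; ring_nf

lemma card_le_edgeBound_card_sub_card_connectedComponent (q : ℕ) (Λ : Finset (OEdge q 2)) :
    (#Λ : ℝ) ≤ edgeBound (q ^ 2 - Nat.card (gridGraph q 2 Λ).ConnectedComponent + 1) := by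
  classical
  set G := gridGraph q 2 Λ
  let S : G.ConnectedComponent → Finset (Fin 2 → Fin q) :=
    fun K => {v | G.connectedComponentMk v = K}
  let E : G.ConnectedComponent → Finset (OEdge q 2) :=
    fun K => {e ∈ Λ | G.connectedComponentMk e.1.1 = K}
  have hE : ∀ K, ∀ e ∈ E K, e.1.1 ∈ S K ∧ e.1.2 ∈ S K := by
    intro K e he
    obtain ⟨heΛ, hK⟩ := mem_filter.1 he
    have hadj : G.Adj e.1.1 e.1.2 := ⟨⟨e, heΛ, rfl⟩, fun h => (h ▸ e.2.2).false⟩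
    simp only [S, mem_filter, mem_univ, true_and]
    exact ⟨hK, (SimpleGraph.ConnectedComponent.sound hadj.reachable).symm.trans hK⟩
  have hS : ∀ K ∈ univ, 1 ≤ (#(S K) : ℝ) := fun K _ => by
    obtain ⟨v, hv⟩ := K.exists_rep
    exact_mod_cast (card_pos.2 ⟨v, mem_filter.2 ⟨mem_univ v, hv⟩⟩ : 0 < #(S K))
  have hΛ : #Λ = ∑ K, #(E K) := card_eq_sum_card_fiberwise fun e _ => mem_univ _
  have hV : (q : ℝ) ^ 2 = ∑ K, (#(S K) : ℝ) := by
    rw [← Nat.cast_sum,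
      ← card_eq_sum_card_fiberwise fun v _ => mem_univ (G.connectedComponentMk v)]
    simp
  calc (#Λ : ℝ) = ∑ K, (#(E K) : ℝ) := by exact_mod_cast hΛ
    _ ≤ ∑ K, edgeBound #(S K) := sum_le_sum fun K _ => card_le_edgeBound (hE K)
    _ ≤ edgeBound (∑ K, (#(S K) : ℝ) - #(univ : Finset G.ConnectedComponent) + 1) :=
        sum_edgeBound_le _ _ hS
    _ = _ := by rw [card_univ, ← Nat.card_eq_fintype_card, ← hV]

lemma add_sqrt_le_of_le_edgeBound {m ℓ : ℝ} (hm : 1 ≤ m) (h : ℓ ≤ edgeBound m) :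
    (ℓ + √(1 + 2 * ℓ)) / 2 + 1 / 2 ≤ m := by
  have ht : 1 ≤ √m := Real.one_le_sqrt.2 hm
  have hsq : √m ^ 2 = m := Real.sq_sqrt (zero_le_one.trans hm)
  have hroot : √(1 + 2 * ℓ) ≤ 2 * √m - 1 := by
    rw [Real.sqrt_le_iff]
    refine ⟨by linarith, ?_⟩
    rw [edgeBound] at h
    nlinarith
  rw [edgeBound] at h
  linarith

lemma zero_le_sq_sub_add_sqrt {q ℓ : ℕ} (h : ℓ ≤ 2 * q * (q - 1)) :
    0 ≤ (q : ℝ) ^ 2 - (1 / 2) * ((ℓ : ℝ) + √(1 + 2 * (ℓ : ℝ))) + 1 / 2 := by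
  rcases Nat.eq_zero_or_pos q with rfl | hq
  · obtain rfl : ℓ = 0 := by simpa using h
    norm_num
  have hℓ : (ℓ : ℝ) ≤ edgeBound ((q : ℝ) ^ 2) := by
    rw [edgeBound, Real.sqrt_sq (Nat.cast_nonneg q)]
    have : (ℓ : ℝ) ≤ 2 * q * (q - 1 : ℕ) := by exact_mod_cast h
    rw [Nat.cast_sub hq, Nat.cast_one] at this
    linarith
  have := add_sqrt_le_of_le_edgeBound (by exact_mod_cast Nat.one_le_pow _ _ hq) hℓ
  linarith

theorem stmt_9_general (q : ℕ) (ℓ : ℕ) (hlp : ℓ ≤ 2 * q * (q - 1)) :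
    (kappaGrad q 2 ℓ : ℝ) ≤
      (q : ℝ) ^ 2 - (1 / 2) * ((ℓ : ℝ) + Real.sqrt (1 + 2 * (ℓ : ℝ))) + 1 / 2 := by
  rcases (univ.filter fun Λ : Finset (OEdge q 2) => ℓ ≤ Λ.card).eq_empty_or_nonempty
    with hempty | hne
  · rw [kappaGrad, hempty, sup_empty, Nat.bot_eq_zero, Nat.cast_zero]
    exact zero_le_sq_sub_add_sqrt hlp
  obtain ⟨Λ, hΛ, hsup⟩ := exists_mem_eq_sup _ hne fun Λ => Module.finrank ℝ (Wgrad q 2 Λ)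
  rw [kappaGrad, hsup, finrank_Wgrad]
  have hc : (Nat.card (gridGraph q 2 Λ).ConnectedComponent : ℝ) ≤ q ^ 2 := by
    have := card_connectedComponent_le (gridGraph q 2 Λ)
    simp only [Nat.card_eq_fintype_card, Fintype.card_fun, Fintype.card_fin] at this ⊢
    exact_mod_cast this
  have hℓ := (Nat.cast_le.2 (mem_filter.1 hΛ).2).trans
    (card_le_edgeBound_card_sub_card_connectedComponent q Λ)
  have := add_sqrt_le_of_le_edgeBound (by linarith) hℓ
  linarith

/-- 2D bound: for `4 < ℓ ≤ p = 2q(q−1)`,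
`κ_∇(ℓ) ≤ n − (1/2)(ℓ + √(1 + 2ℓ)) + 1/2` with `n = q²`. -/
theorem stmt_9 (q : ℕ) (hq : 3 ≤ q) (ℓ : ℕ) (hl : 4 < ℓ) (hlp : ℓ ≤ 2 * q * (q - 1)) :
    (kappaGrad q 2 ℓ : ℝ) ≤
      (q : ℝ) ^ 2 - (1 / 2) * ((ℓ : ℝ) + Real.sqrt (1 + 2 * (ℓ : ℝ))) + 1 / 2 :=
  stmt_9_general q ℓ hlp
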